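/- arXiv:1801.02967 — 2 statements merged into one kernel-verified Lean document; each statement's English description precedes it below -/
import Mathlib

section
/- Suppose Φ is a symmetric positive definite matrix with Φ - δI positive semidefinite and B is a β-cocoercive operator on R^m. Then Φ^{-1}B is (δβ)-cocoercive with respect to the Φ-induced inner product ⟨x, y⟩_Φ = ⟨x, Φy⟩. -/
open Matrix

/-! Put `u = Φ⁻¹ (B x - B y)`, so that `Φ u = B x - B y`. The bound `Φ ≥ δ I` gives
`δ ⟨u, Φ u⟩ ≤ ‖Φ u‖²`, and `β`-cocoercivity of `B` bounds `β ‖Φ u‖²` by `⟨x - y, Φ u⟩`. -/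

theorem Matrix.mul_dotProduct_mulVec_le_of_posSemidef_sub_smul_one {n : Type*} [Fintype n]
    [DecidableEq n] {Φ : Matrix n n ℝ} {δ : ℝ} (hδ : 0 ≤ δ)
    (hpsd : (Φ - δ • (1 : Matrix n n ℝ)).PosSemidef) (u : n → ℝ) :
    δ * (u ⬝ᵥ Φ *ᵥ u) ≤ Φ *ᵥ u ⬝ᵥ Φ *ᵥ u := by
  set w := (Φ - δ • (1 : Matrix n n ℝ)) *ᵥ u
  have hΦu : Φ *ᵥ u = w + δ • u := by
    simp only [w, sub_mulVec, smul_mulVec, one_mulVec, sub_add_cancel]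
  have huw : 0 ≤ u ⬝ᵥ w := by simpa using hpsd.dotProduct_mulVec_nonneg u
  have hww : 0 ≤ w ⬝ᵥ w := by simpa using dotProduct_star_self_nonneg w
  rw [hΦu]
  simp only [dotProduct_add, add_dotProduct, dotProduct_smul, smul_dotProduct, smul_eq_mul,
    dotProduct_comm w u]
  -- the difference of the two sides is `w ⬝ᵥ w + δ * (u ⬝ᵥ w)`
  nlinarith

theorem precond_cocoercive_general {m : ℕ} (Φ : Matrix (Fin m) (Fin m) ℝ) (δ β : ℝ)
    (hδ : 0 < δ) (hβ : 0 < β) (hpd : Φ.PosDef)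
    (hpsd : (Φ - δ • (1 : Matrix (Fin m) (Fin m) ℝ)).PosSemidef)
    (B : (Fin m → ℝ) → (Fin m → ℝ))
    (hco : ∀ x y, β * ((B x - B y) ⬝ᵥ (B x - B y)) ≤ (x - y) ⬝ᵥ (B x - B y)) :
    ∀ x y,
      δ * β * ((Φ⁻¹.mulVec (B x) - Φ⁻¹.mulVec (B y)) ⬝ᵥ
          Φ.mulVec (Φ⁻¹.mulVec (B x) - Φ⁻¹.mulVec (B y)))
        ≤ (x - y) ⬝ᵥ Φ.mulVec (Φ⁻¹.mulVec (B x) - Φ⁻¹.mulVec (B y)) := by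
  intro x y
  set u := Φ⁻¹ *ᵥ B x - Φ⁻¹ *ᵥ B y with hu
  have hΦu : Φ *ᵥ u = B x - B y := by
    rw [hu, ← mulVec_sub, mulVec_mulVec,
      mul_nonsing_inv _ (isUnit_iff_isUnit_det Φ |>.mp hpd.isUnit), one_mulVec]
  have hΦ := mul_dotProduct_mulVec_le_of_posSemidef_sub_smul_one hδ.le hpsd u
  rw [hΦu] at hΦ ⊢
  calc δ * β * (u ⬝ᵥ (B x - B y)) = β * (δ * (u ⬝ᵥ (B x - B y))) := by ring
    _ ≤ β * ((B x - B y) ⬝ᵥ (B x - B y)) := mul_le_mul_of_nonneg_left hΦ hβ.le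
    _ ≤ (x - y) ⬝ᵥ (B x - B y) := hco x y

/-- If `Φ` is symmetric positive definite with `Φ - δI` positive semidefinite and `B` is
`β`-cocoercive, then `Φ⁻¹ B` is `(δβ)`-cocoercive with respect to the `Φ`-induced inner
product `⟨x, y⟩_Φ = ⟨x, Φ y⟩`. -/
theorem precond_cocoercive {m : ℕ} (Φ : Matrix (Fin m) (Fin m) ℝ) (δ β : ℝ)
    (hδ : 0 < δ) (hβ : 0 < β) (hsymm : Φ.IsSymm) (hpd : Φ.PosDef)
    (hpsd : (Φ - δ • (1 : Matrix (Fin m) (Fin m) ℝ)).PosSemidef)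
    (B : (Fin m → ℝ) → (Fin m → ℝ))
    (hco : ∀ x y, β * ((B x - B y) ⬝ᵥ (B x - B y)) ≤ (x - y) ⬝ᵥ (B x - B y)) :
    ∀ x y,
      δ * β * ((Φ⁻¹.mulVec (B x) - Φ⁻¹.mulVec (B y)) ⬝ᵥ
          Φ.mulVec (Φ⁻¹.mulVec (B x) - Φ⁻¹.mulVec (B y)))
        ≤ (x - y) ⬝ᵥ Φ.mulVec (Φ⁻¹.mulVec (B x) - Φ⁻¹.mulVec (B y)) :=
  precond_cocoercive_general Φ δ β hδ hβ hpd hpsd B hco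
end

section
/- Let G be a connected undirected graph. Suppose x* ∈ Ω and λ* satisfy the KKT conditions: 0 ∈ ∇_{x_i} f_i(x_i*, x_{−i}*) + A_i^T λ* + N_{Ω_i}(x_i*) for all i, and Σ_i A_i x_i* = Σ_i b_i. If additionally Λ* = 1_N ⊗ λ* and z* satisfies −𝐕z* − 𝐀x* + 𝐛 = 0 componentwise with 𝐕 = V ⊗ I_m, then (Λ*, z*, x*) is a zero of the operator A + B with A(Λ,z,x) = (−𝐀x − 𝐕z, 𝐕^T Λ, 𝐀^T Λ + N_Ω(x)) and B(Λ,z,x) = (𝐛, 0, F(x)). Conversely, any zero of A + B yields Λ* = 1_N ⊗ λ* (multiplier consensus) and (x*, λ*) satisfying the KKT conditions. -/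
open Matrix

/-- Incidence matrix of the oriented graph with edge list `e`. -/
def Vinc {N M : ℕ} (e : Fin M → Fin N × Fin N) : Matrix (Fin N) (Fin M) ℝ :=
  Matrix.of fun i l => if i = (e l).2 then 1 else if i = (e l).1 then -1 else 0

/-- The (undirected) graph defined by the edge list `e` is connected. -/
def ConnectedEdges {N M : ℕ} (e : Fin M → Fin N × Fin N) : Prop :=
  ∀ i j : Fin N, Relation.ReflTransGen (fun a b => ∃ l, e l = (a, b) ∨ e l = (b, a)) i j

/-- Normal cone of `C ⊆ ℝ^k` at `x` (w.r.t. the dot product). -/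
def NC {k : ℕ} (C : Set (Fin k → ℝ)) (x : Fin k → ℝ) : Set (Fin k → ℝ) :=
  {v | x ∈ C ∧ ∀ y ∈ C, v ⬝ᵥ (y - x) ≤ 0}

/-- KKT conditions for the variational GNE: `0 ∈ F(x)_i + A_iᵀ λ + N_{Ω_i}(x_i)` for all
`i` (where `F` is the stacked pseudo-gradient, `F(x)_i = ∇_{x_i} f_i(x_i, x_{-i})`), and
`Σ_i A_i x_i = Σ_i b_i`. -/
def KKTcond {Np m : ℕ} (n : Fin Np → ℕ) (A : ∀ i, Matrix (Fin m) (Fin (n i)) ℝ)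
    (b : Fin Np → Fin m → ℝ) (Ω : ∀ i, Set (Fin (n i) → ℝ))
    (F : (∀ j, Fin (n j) → ℝ) → ∀ i, Fin (n i) → ℝ)
    (x : ∀ i, Fin (n i) → ℝ) (lam : Fin m → ℝ) : Prop :=
  (∀ i, ∃ v ∈ NC (Ω i) (x i), F x i + (A i)ᵀ.mulVec lam + v = 0) ∧
    ∑ i, (A i).mulVec (x i) = ∑ i, b i

/-- `(Λ, z, x)` is a zero of `𝔄 + 𝔅` with
`𝔄(Λ,z,x) = (-𝐀x - 𝐕z, 𝐕ᵀΛ, 𝐀ᵀΛ + N_Ω(x))` and `𝔅(Λ,z,x) = (𝐛, 0, F(x))`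
(all written blockwise, with `𝐕 = V ⊗ I_m`). -/
def ZeroCond {Np M m : ℕ} (n : Fin Np → ℕ) (e : Fin M → Fin Np × Fin Np)
    (A : ∀ i, Matrix (Fin m) (Fin (n i)) ℝ) (b : Fin Np → Fin m → ℝ)
    (Ω : ∀ i, Set (Fin (n i) → ℝ))
    (F : (∀ j, Fin (n j) → ℝ) → ∀ i, Fin (n i) → ℝ)
    (Λ : Fin Np → Fin m → ℝ) (z : Fin M → Fin m → ℝ) (x : ∀ i, Fin (n i) → ℝ) : Prop :=
  (∀ i, -(A i).mulVec (x i) - (∑ l, Vinc e i l • z l) + b i = 0) ∧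
    (∀ l, ∑ i, Vinc e i l • Λ i = 0) ∧
    (∀ i, ∃ v ∈ NC (Ω i) (x i), (A i)ᵀ.mulVec (Λ i) + v + F x i = 0)

/-! Column `l` of the incidence matrix has exactly the entries `+1` at the head and `-1` at the
tail of edge `l`. Hence `𝐕ᵀΛ = 0` says that `Λ` agrees at the two ends of every edge, which by
connectivity forces consensus `Λ = 1_N ⊗ λ`; and every column sums to zero, so summing the
balance equations `-A_i x_i - (𝐕z)_i + b_i = 0` over `i` eliminates `z` and leaves the coupling
constraint `Σ A_i x_i = Σ b_i`. -/

section Incidence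

variable {N M : ℕ} {e : Fin M → Fin N × Fin N} {E : Type*} [AddCommGroup E] [Module ℝ E]

theorem sum_Vinc_smul {l : Fin M} (hne : (e l).1 ≠ (e l).2) (w : Fin N → E) :
    ∑ i, Vinc e i l • w i = w (e l).2 - w (e l).1 := by
  rw [Fintype.sum_eq_add (e l).2 (e l).1 hne.symm fun i hi => by simp [Vinc, hi.1, hi.2]]
  simp [Vinc, hne, sub_eq_add_neg]

theorem sum_Vinc_smul_eq_zero_iff {l : Fin M} (hne : (e l).1 ≠ (e l).2) (w : Fin N → E) :
    ∑ i, Vinc e i l • w i = 0 ↔ w (e l).1 = w (e l).2 := by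
  rw [sum_Vinc_smul hne, sub_eq_zero, eq_comm]

theorem sum_sum_Vinc_smul_eq_zero (hne : ∀ l, (e l).1 ≠ (e l).2) (z : Fin M → E) :
    ∑ i, ∑ l, Vinc e i l • z l = 0 := by
  rw [Finset.sum_comm]
  exact Finset.sum_eq_zero fun l _ => (sum_Vinc_smul_eq_zero_iff (hne l) fun _ => z l).2 rfl

end Incidence

theorem ConnectedEdges.exists_eq_const {N M : ℕ} {e : Fin M → Fin N × Fin N}
    (hconn : ConnectedEdges e) {α : Type*} [Nonempty α] (w : Fin N → α)
    (hw : ∀ l, w (e l).1 = w (e l).2) : ∃ c, ∀ i, w i = c := by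
  rcases isEmpty_or_nonempty (Fin N) with _ | ⟨⟨i₀⟩⟩
  · exact ⟨Classical.arbitrary α, fun i => isEmptyElim i⟩
  refine ⟨w i₀, fun i => ?_⟩
  induction hconn i₀ i with
  | refl => rfl
  | tail _ hedge ih =>
    obtain ⟨l, hl | hl⟩ := hedge
    · simpa [hl, ih] using (hw l).symm
    · simpa [hl, ih] using hw l

/-- KKT points with consensual multipliers `Λ* = 1_N ⊗ λ*` and edge variables `z*`
balancing the constraint are zeros of `𝔄 + 𝔅`; conversely, any zero of `𝔄 + 𝔅` has
consensual multipliers `Λ = 1_N ⊗ λ*` and `(x, λ*)` satisfies the KKT conditions. -/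
theorem zero_iff_KKT {Np M m : ℕ} (n : Fin Np → ℕ) (e : Fin M → Fin Np × Fin Np)
    (hne : ∀ l, (e l).1 ≠ (e l).2) (hconn : ConnectedEdges e)
    (A : ∀ i, Matrix (Fin m) (Fin (n i)) ℝ) (b : Fin Np → Fin m → ℝ)
    (Ω : ∀ i, Set (Fin (n i) → ℝ))
    (F : (∀ j, Fin (n j) → ℝ) → ∀ i, Fin (n i) → ℝ) :
    (∀ (xstar : ∀ i, Fin (n i) → ℝ) (lam : Fin m → ℝ) (zstar : Fin M → Fin m → ℝ),
        KKTcond n A b Ω F xstar lam →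
        (∀ i, -(∑ l, Vinc e i l • zstar l) - (A i).mulVec (xstar i) + b i = 0) →
        ZeroCond n e A b Ω F (fun _ => lam) zstar xstar) ∧
      (∀ (Λ : Fin Np → Fin m → ℝ) (z : Fin M → Fin m → ℝ) (x : ∀ i, Fin (n i) → ℝ),
        ZeroCond n e A b Ω F Λ z x →
        ∃ lam : Fin m → ℝ, (∀ i, Λ i = lam) ∧ KKTcond n A b Ω F x lam) := by
  refine ⟨fun x lam z ⟨hstat, _⟩ hbal => ⟨fun i => by linear_combination hbal i,
    fun l => (sum_Vinc_smul_eq_zero_iff (hne l) _).2 rfl, fun i => ?_⟩, ?_⟩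
  · obtain ⟨v, hv, h⟩ := hstat i
    exact ⟨v, hv, by linear_combination h⟩
  rintro Λ z x ⟨hbal, hcons, hstat⟩
  obtain ⟨lam, hlam⟩ :=
    hconn.exists_eq_const Λ fun l => (sum_Vinc_smul_eq_zero_iff (hne l) Λ).1 (hcons l)
  refine ⟨lam, hlam, fun i => ?_, ?_⟩
  · obtain ⟨v, hv, h⟩ := hstat i
    exact ⟨v, hv, by rw [← hlam i]; linear_combination h⟩
  calc ∑ i, (A i).mulVec (x i) = ∑ i, (b i - ∑ l, Vinc e i l • z l) :=
        Finset.sum_congr rfl fun i _ => by linear_combination -hbal i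
    _ = ∑ i, b i := by rw [Finset.sum_sub_distrib, sum_sum_Vinc_smul_eq_zero hne, sub_zero]
end
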